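/- arXiv:2104.03988 — 5 statements merged into one kernel-verified Lean document; each statement's English description precedes it below -/
import Mathlib

section
/- The product of two (probabilists') Hermite polynomials satisfies H_m(x)·H_n(x) = Σ_{s=0}^{min(m,n)} (m choose s)(n choose s) s! · H_{m+n-2s}(x), where H_k(x) = (-1)^k e^{x²/2} d^k/dx^k e^{-x²/2}. -/
open Polynomial

/-- Probabilists' Hermite polynomial as a real function,
`H_k(x) = (-1)^k e^{x²/2} dᵏ/dxᵏ e^{-x²/2}` (equals Mathlib's `Polynomial.hermite`). -/
noncomputable def H (k : ℕ) (x : ℝ) : ℝ :=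
  (-1 : ℝ) ^ k * Real.exp (x ^ 2 / 2) * iteratedDeriv k (fun y => Real.exp (-y ^ 2 / 2)) x

lemma H_eq (k : ℕ) (x : ℝ) : H k x = aeval x (hermite k) := by
  have hf : (fun y : ℝ => Real.exp (-y ^ 2 / 2)) = fun y => Real.exp (-(y ^ 2 / 2)) := by
    funext y; rw [neg_div]
  rw [H, hf, iteratedDeriv_eq_iterate, deriv_gaussian_eq_hermite_mul_gaussian]
  rw [Real.exp_neg]
  have h0 : Real.exp (x ^ 2 / 2) ≠ 0 := Real.exp_ne_zero _
  have hpow : ((-1 : ℝ)) ^ k * (-1) ^ k = 1 := by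
    rw [← pow_add, ← two_mul, pow_mul]; norm_num
  field_simp
  linear_combination (aeval x (hermite k)) * hpow

lemma derivative_hermite (n : ℕ) :
    derivative (hermite (n + 1)) = (n + 1 : ℤ) • hermite n := by
  induction n with
  | zero => simp [hermite_one, hermite_zero]
  | succ n ih =>
    rw [hermite_succ (n+1), derivative_sub, derivative_mul, derivative_X, one_mul, ih,
      derivative_smul, hermite_succ n]
    simp only [zsmul_eq_mul, smul_sub]
    push_cast
    ring

lemma hermite_rec (n : ℕ) :
    hermite (n + 2) = X * hermite (n + 1) - (n + 1 : ℤ) • hermite n := by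
  rw [hermite_succ (n+1), derivative_hermite]

lemma H_rec (n : ℕ) (x : ℝ) :
    x * H (n + 1) x = H (n + 2) x + (n + 1 : ℝ) * H n x := by
  simp only [H_eq]
  rw [hermite_rec]
  simp [mul_comm]

lemma key (m n t : ℕ) (h1 : t ≤ n) (h3 : t ≤ m + 1) (h2 : 2 * t ≤ m + n) :
    ((m+2).choose (t+1) : ℝ) * (n.choose (t+1)) * (t+1).factorial =
      ((m+1).choose (t+1) : ℝ) * (n.choose (t+1)) * (t+1).factorial
      + ((m+1).choose t : ℝ) * (n.choose t) * t.factorial * (((m + n - 2*t : ℕ) : ℝ) + 1)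
      - ((m:ℝ)+1) * ((m.choose t : ℝ) * (n.choose t) * t.factorial) := by
  have f1 : ((m+2).choose (t+1) : ℝ) = ((m+1).choose t : ℝ) + ((m+1).choose (t+1) : ℝ) := by
    rw [← Nat.cast_add, ← Nat.choose_succ_succ']
  have f2 : (n.choose (t+1) : ℝ) * ((t:ℝ)+1) = (n.choose t : ℝ) * ((n:ℝ) - t) := by
    have := Nat.choose_succ_right_eq n t
    have hc : ((n - t : ℕ) : ℝ) = (n:ℝ) - t := Nat.cast_sub h1
    calc (n.choose (t+1) : ℝ) * ((t:ℝ)+1)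
        = ((n.choose (t+1) * (t+1) : ℕ) : ℝ) := by push_cast; ring
      _ = ((n.choose t * (n - t) : ℕ) : ℝ) := by rw [this]
      _ = (n.choose t : ℝ) * ((n:ℝ) - t) := by rw [Nat.cast_mul, hc]
  have f3 : ((m+1).choose (t+1) : ℝ) * ((t:ℝ)+1) = ((m+1).choose t : ℝ) * ((m:ℝ)+1 - t) := by
    have := Nat.choose_succ_right_eq (m+1) t
    have hc : ((m + 1 - t : ℕ) : ℝ) = (m:ℝ)+1 - t := by
      rw [Nat.cast_sub h3]; push_cast; ring
    calc ((m+1).choose (t+1) : ℝ) * ((t:ℝ)+1)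
        = (((m+1).choose (t+1) * (t+1) : ℕ) : ℝ) := by push_cast; ring
      _ = (((m+1).choose t * (m + 1 - t) : ℕ) : ℝ) := by rw [this]
      _ = ((m+1).choose t : ℝ) * ((m:ℝ)+1 - t) := by rw [Nat.cast_mul, hc]
  have f4 : ((m:ℝ)+1) * (m.choose t : ℝ) = ((m+1).choose (t+1) : ℝ) * ((t:ℝ)+1) := by
    have := Nat.add_one_mul_choose_eq m t
    exact_mod_cast congrArg (Nat.cast (R := ℝ)) this
  have f5 : (((t+1).factorial : ℕ) : ℝ) = ((t:ℝ)+1) * (t.factorial : ℝ) := by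
    rw [Nat.factorial_succ]; push_cast; ring
  have f6 : ((m + n - 2*t : ℕ) : ℝ) = (m:ℝ) + n - 2*t := by
    rw [Nat.cast_sub h2]; push_cast; ring
  linear_combination ((n.choose (t+1) : ℝ) * (t+1).factorial) * f1
    + ((n.choose t : ℝ) * t.factorial) * f4
    + ((n.choose t : ℝ) * t.factorial) * f3
    - (((m+1).choose t : ℝ) * (n.choose t) * t.factorial) * f6
    + (((m+1).choose t : ℝ) * (n.choose (t+1))) * f5
    + (((m+1).choose t : ℝ) * t.factorial) * f2

lemma H_zero (x : ℝ) : H 0 x = 1 := by simp [H_eq, hermite_zero]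
lemma H_one (x : ℝ) : H 1 x = x := by simp [H_eq, hermite_one]

lemma prod_le (m : ℕ) : ∀ n, m ≤ n → ∀ x : ℝ,
    H m x * H n x = ∑ s ∈ Finset.range (m + 1),
      (m.choose s : ℝ) * (n.choose s : ℝ) * (s.factorial : ℝ) * H (m + n - 2 * s) x := by
  induction m using Nat.strong_induction_on with
  | _ m ih =>
    match m, ih with
    | 0, _ =>
      intro n _ x
      simp [H_zero]
    | 1, _ =>
      intro n hn x
      obtain ⟨k, rfl⟩ := Nat.exists_eq_add_of_le hn
      rw [Finset.sum_range_succ, Finset.sum_range_succ, Finset.sum_range_zero, H_one]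
      have h1 : 1 + (1 + k) - 2 * 0 = k + 2 := by omega
      have h2 : 1 + (1 + k) - 2 * 1 = k := by omega
      have h3 : (1 : ℕ) + k = k + 1 := by omega
      rw [h1, h2, h3, H_rec k x]
      simp only [Nat.choose_zero_right, Nat.choose_one_right, Nat.choose_self,
        Nat.factorial_zero, Nat.factorial_one, Nat.cast_one, Nat.cast_add]
      push_cast
      ring
    | (m+2), ih =>
      intro n hn x
      have ih1 := ih (m+1) (by omega) n (by omega) x
      have ih0 := ih m (by omega) n (by omega) x
      -- step 1: recurrence
      have hrec : H (m+2) x = x * H (m+1) x - ((m:ℝ)+1) * H m x := by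
        have := H_rec m x
        linarith [this]
      -- step 3: x * (H (m+1) x * H n x) expanded
      have hx : x * (H (m+1) x * H n x) =
          (∑ s ∈ Finset.range (m+2),
            ((m+1).choose s : ℝ) * (n.choose s) * s.factorial * H (m+2+n-2*s) x)
          + ∑ s ∈ Finset.range (m+2),
            ((m+1).choose s : ℝ) * (n.choose s) * s.factorial * (((m+n-2*s : ℕ) : ℝ)+1)
              * H (m+n-2*s) x := by
        rw [ih1, Finset.mul_sum, ← Finset.sum_add_distrib]
        apply Finset.sum_congr rfl
        intro s hs
        have hs' : s ≤ m + 1 := by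
          have := Finset.mem_range.mp hs; omega
        have hidx1 : m+1+n-2*s = (m+n-2*s)+1 := by omega
        have hidx2 : (m+n-2*s)+2 = m+2+n-2*s := by omega
        rw [hidx1]
        have := H_rec (m+n-2*s) x
        rw [hidx2] at this
        calc x * (((m+1).choose s : ℝ) * (n.choose s) * s.factorial * H ((m+n-2*s)+1) x)
            = ((m+1).choose s : ℝ) * (n.choose s) * s.factorial * (x * H ((m+n-2*s)+1) x) := by
              ring
          _ = _ := by rw [this]; push_cast; ring
      -- extend first sum to range (m+3)
      have hext1 : (∑ s ∈ Finset.range (m+2),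
            ((m+1).choose s : ℝ) * (n.choose s) * s.factorial * H (m+2+n-2*s) x)
          = ∑ s ∈ Finset.range (m+3),
            ((m+1).choose s : ℝ) * (n.choose s) * s.factorial * H (m+2+n-2*s) x := by
        rw [Finset.sum_range_succ (n := m+2)]
        rw [Nat.choose_succ_self]
        push_cast
        ring
      -- extend third sum to range (m+2)
      have hext3 : ((m:ℝ)+1) * (H m x * H n x)
          = ∑ s ∈ Finset.range (m+2),
            ((m:ℝ)+1) * ((m.choose s : ℝ) * (n.choose s) * s.factorial) * H (m+n-2*s) x := by
        rw [Finset.sum_range_succ, Nat.choose_succ_self, ih0, Finset.mul_sum]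
        simp only [Nat.cast_zero, zero_mul, mul_zero, add_zero]
        exact Finset.sum_congr rfl fun s _ => by ring
      -- shift the extended first sum
      have hshift1 : (∑ s ∈ Finset.range (m+3),
            ((m+1).choose s : ℝ) * (n.choose s) * s.factorial * H (m+2+n-2*s) x)
          = ((m+1).choose 0 : ℝ) * (n.choose 0) * (Nat.factorial 0) * H (m+2+n) x
            + ∑ t ∈ Finset.range (m+2),
              ((m+1).choose (t+1) : ℝ) * (n.choose (t+1)) * (t+1).factorial * H (m+n-2*t) x := by
        have hsum : (∑ t ∈ Finset.range (m+2),
              ((m+1).choose (t+1) : ℝ) * (n.choose (t+1)) * (t+1).factorial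
                * H (m+2+n-2*(t+1)) x)
            = ∑ t ∈ Finset.range (m+2),
              ((m+1).choose (t+1) : ℝ) * (n.choose (t+1)) * (t+1).factorial
                * H (m+n-2*t) x := by
          refine Finset.sum_congr rfl fun t ht => ?_
          have ht' : t ≤ m + 1 := by have := Finset.mem_range.mp ht; omega
          have hidx : m+2+n-2*(t+1) = m+n-2*t := by omega
          rw [hidx]
        rw [Finset.sum_range_succ' _ (m+2)]
        rw [hsum]
        norm_num
        ring
      -- shift the RHS
      have hshiftR : (∑ s ∈ Finset.range (m+3),
            ((m+2).choose s : ℝ) * (n.choose s) * s.factorial * H (m+2+n-2*s) x)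
          = ((m+2).choose 0 : ℝ) * (n.choose 0) * (Nat.factorial 0) * H (m+2+n) x
            + ∑ t ∈ Finset.range (m+2),
              ((m+2).choose (t+1) : ℝ) * (n.choose (t+1)) * (t+1).factorial * H (m+n-2*t) x := by
        have hsum : (∑ t ∈ Finset.range (m+2),
              ((m+2).choose (t+1) : ℝ) * (n.choose (t+1)) * (t+1).factorial
                * H (m+2+n-2*(t+1)) x)
            = ∑ t ∈ Finset.range (m+2),
              ((m+2).choose (t+1) : ℝ) * (n.choose (t+1)) * (t+1).factorial
                * H (m+n-2*t) x := by
          refine Finset.sum_congr rfl fun t ht => ?_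
          have ht' : t ≤ m + 1 := by have := Finset.mem_range.mp ht; omega
          have hidx : m+2+n-2*(t+1) = m+n-2*t := by omega
          rw [hidx]
        rw [Finset.sum_range_succ' _ (m+2)]
        rw [hsum]
        norm_num
        ring
      -- combine the shifted sums pointwise via the key identity
      have hcomb : (∑ t ∈ Finset.range (m+2),
              ((m+1).choose (t+1) : ℝ) * (n.choose (t+1)) * (t+1).factorial * H (m+n-2*t) x)
            + (∑ s ∈ Finset.range (m+2),
              ((m+1).choose s : ℝ) * (n.choose s) * s.factorial * (((m+n-2*s : ℕ) : ℝ)+1)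
                * H (m+n-2*s) x)
            - (∑ s ∈ Finset.range (m+2),
              ((m:ℝ)+1) * ((m.choose s : ℝ) * (n.choose s) * s.factorial) * H (m+n-2*s) x)
          = ∑ t ∈ Finset.range (m+2),
              ((m+2).choose (t+1) : ℝ) * (n.choose (t+1)) * (t+1).factorial
                * H (m+n-2*t) x := by
        rw [← Finset.sum_add_distrib, ← Finset.sum_sub_distrib]
        refine Finset.sum_congr rfl fun t ht => ?_
        have ht' : t ≤ m + 1 := by have := Finset.mem_range.mp ht; omega
        have hk := key m n t (by omega) (by omega) (by omega)
        rw [hk]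
        ring
      -- assemble
      calc H (m+2) x * H n x
          = x * (H (m+1) x * H n x) - ((m:ℝ)+1) * (H m x * H n x) := by
            rw [hrec]; ring
        _ = (((m+1).choose 0 : ℝ) * (n.choose 0) * (Nat.factorial 0) * H (m+2+n) x
              + ∑ t ∈ Finset.range (m+2),
                ((m+1).choose (t+1) : ℝ) * (n.choose (t+1)) * (t+1).factorial * H (m+n-2*t) x)
            + (∑ s ∈ Finset.range (m+2),
                ((m+1).choose s : ℝ) * (n.choose s) * s.factorial * (((m+n-2*s : ℕ) : ℝ)+1)
                  * H (m+n-2*s) x)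
            - ∑ s ∈ Finset.range (m+2),
                ((m:ℝ)+1) * ((m.choose s : ℝ) * (n.choose s) * s.factorial) * H (m+n-2*s) x := by
            rw [hx, hext1, hshift1, hext3]
        _ = _ := by
            rw [hshiftR, ← hcomb]
            simp only [Nat.choose_zero_right, Nat.cast_one, Nat.factorial_zero]
            ring

theorem hermite_product (m n : ℕ) (x : ℝ) :
    H m x * H n x =
      ∑ s ∈ Finset.range (min m n + 1),
        (m.choose s : ℝ) * (n.choose s : ℝ) * (s.factorial : ℝ) * H (m + n - 2 * s) x := by
  rcases le_total m n with hmn | hnm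
  · rw [min_eq_left hmn]
    exact prod_le m n hmn x
  · rw [min_eq_right hnm, mul_comm]
    rw [prod_le n m hnm x]
    refine Finset.sum_congr rfl fun s _ => ?_
    have : n + m = m + n := by omega
    rw [this]
    ring
end

section
/- For every real x ∈ (-π, π) with x ≠ 0, the sequence a_N(x) = 4^N cos^{2N}(x/2) / C(2N, N) tends to 0 as N → ∞, while for any continuous function f on [-π,π], (1/(2π)) ∫_{-π}^{π} f(x) · 4^N cos^{2N}(x/2)/C(2N,N) dx → f(0) as N → ∞. -/
open Real Filter MeasureTheory

private lemma four_pow_div_choose_le (N : ℕ) (hN : 1 ≤ N) :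
    (4 : ℝ) ^ N / ((2 * N).choose N : ℝ) ≤ 2 * N := by
  have h := Nat.four_pow_le_two_mul_self_mul_centralBinom N hN
  simp only [Nat.centralBinom_eq_two_mul_choose] at h
  have hC : (0 : ℝ) < ((2 * N).choose N : ℝ) := by
    have := Nat.centralBinom_pos N
    rw [Nat.centralBinom_eq_two_mul_choose] at this
    exact_mod_cast this
  rw [div_le_iff₀ hC]
  exact_mod_cast h

private lemma phi_le {x c : ℝ} (hc : Real.cos (x / 2) ^ 2 ≤ c) (hc0 : 0 ≤ c)
    (N : ℕ) (hN : 1 ≤ N) :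
    (4 : ℝ) ^ N * Real.cos (x / 2) ^ (2 * N) / ((2 * N).choose N : ℝ)
      ≤ 2 * N * c ^ N := by
  have hC : (0 : ℝ) < ((2 * N).choose N : ℝ) := by
    have := Nat.centralBinom_pos N
    rw [Nat.centralBinom_eq_two_mul_choose] at this
    exact_mod_cast this
  have h1 : Real.cos (x / 2) ^ (2 * N) ≤ c ^ N := by
    rw [pow_mul]
    exact pow_le_pow_left₀ (sq_nonneg _) hc N
  have h1' : (0 : ℝ) ≤ Real.cos (x / 2) ^ (2 * N) := by
    rw [pow_mul]; positivity
  have h2 := four_pow_div_choose_le N hN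
  calc (4 : ℝ) ^ N * Real.cos (x / 2) ^ (2 * N) / ((2 * N).choose N : ℝ)
      = ((4 : ℝ) ^ N / ((2 * N).choose N : ℝ)) * Real.cos (x / 2) ^ (2 * N) := by ring
    _ ≤ (2 * N) * c ^ N := by
        apply mul_le_mul h2 h1 h1' (by positivity)

private lemma wallis_prod_eq (n : ℕ) :
    ∏ i ∈ Finset.range n, (2 * (i : ℝ) + 1) / (2 * i + 2)
      = ((2 * n).choose n : ℝ) / 4 ^ n := by
  induction n with
  | zero => simp
  | succ k ih =>
    rw [Finset.prod_range_succ, ih]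
    have h := Nat.succ_mul_centralBinom_succ k
    simp only [Nat.centralBinom_eq_two_mul_choose] at h
    have h2 : ((k : ℝ) + 1) * ((2 * (k + 1)).choose (k + 1) : ℝ)
        = (2 * (2 * (k : ℝ) + 1)) * ((2 * k).choose k : ℝ) := by
      exact_mod_cast congrArg (Nat.cast (R := ℝ)) h
    have h4 : (4 : ℝ) ^ k ≠ 0 := by positivity
    field_simp
    linear_combination (-2 * (4:ℝ) ^ k) * h2

private lemma integral_cos_half_pow (N : ℕ) :
    (∫ x in (-π)..π, Real.cos (x / 2) ^ (2 * N))
      = 2 * π * ((2 * N).choose N : ℝ) / 4 ^ N := by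
  have h1 : (∫ x in (-π)..π, Real.cos (x / 2) ^ (2 * N))
      = (2 : ℝ) • ∫ u in (-π / 2)..(π / 2), Real.cos u ^ (2 * N) := by
    exact intervalIntegral.integral_comp_div (f := fun u => Real.cos u ^ (2 * N)) two_ne_zero
  have h2 : (∫ u in (-π / 2)..(π / 2), Real.cos u ^ (2 * N))
      = ∫ t in (0 : ℝ)..π, Real.sin t ^ (2 * N) := by
    have : (∫ u in (-π / 2)..(π / 2), Real.cos u ^ (2 * N))
        = ∫ u in (-π / 2)..(π / 2), (fun t => Real.sin t ^ (2 * N)) (u + π / 2) := by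
      congr 1
      funext u
      simp [Real.sin_add_pi_div_two]
    rw [this, intervalIntegral.integral_comp_add_right (fun t => Real.sin t ^ (2 * N)) (π / 2)]
    have e0 : -π / 2 + π / 2 = (0 : ℝ) := by ring
    have e1 : π / 2 + π / 2 = π := by ring
    rw [e0, e1]
  rw [h1, h2, integral_sin_pow_even, wallis_prod_eq]
  simp [smul_eq_mul]
  ring

theorem dirac_sequence_central_binomial :
    (∀ x : ℝ, x ∈ Set.Ioo (-π) π → x ≠ 0 →
      Tendsto (fun N : ℕ => (4 : ℝ) ^ N * Real.cos (x / 2) ^ (2 * N) / ((2 * N).choose N : ℝ))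
        atTop (nhds 0)) ∧
    (∀ f : ℝ → ℝ, ContinuousOn f (Set.Icc (-π) π) →
      Tendsto (fun N : ℕ =>
          (1 / (2 * π)) * ∫ x in (-π)..π,
            f x * ((4 : ℝ) ^ N * Real.cos (x / 2) ^ (2 * N) / ((2 * N).choose N : ℝ)))
        atTop (nhds (f 0))) := by
  have hππ : (0 : ℝ) < π := pi_pos
  have hle : -π ≤ π := by linarith
  have geom_tendsto : ∀ c : ℝ, 0 ≤ c → c < 1 →
      Tendsto (fun N : ℕ => 2 * (N : ℝ) * c ^ N) atTop (nhds 0) := by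
    intro c hc0 hc1
    have h : Tendsto (fun N : ℕ => (2 : ℝ) * ((N : ℝ) ^ 1 * c ^ N)) atTop (nhds (2 * 0)) :=
      (tendsto_pow_const_mul_const_pow_of_lt_one 1 hc0 hc1).const_mul 2
    rw [mul_zero] at h
    exact h.congr fun N => by ring
  constructor
  · -- pointwise convergence
    intro x hx hx0
    have habs : |x| < π := abs_lt.2 ⟨hx.1, hx.2⟩
    have habs0 : 0 < |x| := abs_pos.2 hx0
    have hcos_eq : Real.cos (x / 2) = Real.cos (|x| / 2) := by
      rw [← Real.cos_abs (x / 2), abs_div]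
      norm_num
    have hcos_lt : Real.cos (|x| / 2) < 1 := by
      have h := Real.cos_lt_cos_of_nonneg_of_le_pi (le_refl (0:ℝ))
              (show |x| / 2 ≤ π by linarith) (show (0:ℝ) < |x| / 2 by linarith)
      simpa using h
    have hcos_nn : 0 ≤ Real.cos (x / 2) := by
      rw [hcos_eq]
      exact Real.cos_nonneg_of_mem_Icc ⟨by linarith, by linarith⟩
    set c := Real.cos (x / 2) ^ 2 with hc_def
    have hc0 : 0 ≤ c := sq_nonneg _
    have hc1 : c < 1 := by
      rw [hc_def, hcos_eq]
      exact pow_lt_one₀ (hcos_eq ▸ hcos_nn) hcos_lt two_ne_zero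
    apply squeeze_zero'
    · filter_upwards with N
      have h1' : (0 : ℝ) ≤ Real.cos (x / 2) ^ (2 * N) := by rw [pow_mul]; positivity
      positivity
    · filter_upwards [eventually_ge_atTop 1] with N hN
      exact phi_le (le_refl c) hc0 N hN
    · exact geom_tendsto c hc0 hc1
  · -- Dirac sequence convergence
    intro f hf
    set s : Set ℝ := Set.Ioc (-π) π with hs_def
    set φ : ℕ → ℝ → ℝ := fun N x =>
      (1 / (2 * π)) * ((4 : ℝ) ^ N * Real.cos (x / 2) ^ (2 * N) / ((2 * N).choose N : ℝ))
      with hφ_def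
    have hC : ∀ N : ℕ, (0 : ℝ) < ((2 * N).choose N : ℝ) := by
      intro N
      have := Nat.centralBinom_pos N
      rw [Nat.centralBinom_eq_two_mul_choose] at this
      exact_mod_cast this
    have hφ_nonneg : ∀ N : ℕ, ∀ x : ℝ, 0 ≤ φ N x := by
      intro N x
      have h1' : (0 : ℝ) ≤ Real.cos (x / 2) ^ (2 * N) := by rw [pow_mul]; positivity
      have := hC N
      simp only [hφ_def]
      positivity
    have hint : ∀ N : ℕ, (∫ x in s, φ N x) = 1 := by
      intro N
      have e1 : (∫ x in s, φ N x) = ∫ x in (-π)..π, φ N x := by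
        rw [intervalIntegral.integral_of_le hle]
      rw [e1]
      have e2 : (fun x => φ N x)
          = fun x => ((1 / (2 * π)) * ((4 : ℝ) ^ N / ((2 * N).choose N : ℝ)))
              * Real.cos (x / 2) ^ (2 * N) := by
        funext x
        simp only [hφ_def]
        ring
      rw [e2, intervalIntegral.integral_const_mul, integral_cos_half_pow]
      have := hC N
      have h4 : (4 : ℝ) ^ N ≠ 0 := by positivity
      field_simp
    have h0s : (0 : ℝ) ∈ s := ⟨by linarith, by linarith⟩
    have main : Tendsto (fun N => ∫ x in s, φ N x • f x) atTop (nhds (f 0)) := by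
      apply tendsto_setIntegral_peak_smul_of_integrableOn_of_tendsto (x₀ := (0 : ℝ))
        measurableSet_Ioc measurableSet_Ioc (subset_refl s) self_mem_nhdsWithin
        measure_Ioc_lt_top.ne
      · exact Filter.Eventually.of_forall fun N x _ => hφ_nonneg N x
      · -- uniform convergence away from 0
        intro u hu h0u
        obtain ⟨δ, hδ, hball⟩ := Metric.isOpen_iff.1 hu 0 h0u
        set δ' := min δ π with hδ'_def
        have hδ'0 : 0 < δ' := lt_min hδ hππ
        have hδ'π : δ' ≤ π := min_le_right _ _
        set c := Real.cos (δ' / 2) ^ 2 with hc_def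
        have hc0 : 0 ≤ c := sq_nonneg _
        have hc1 : c < 1 := by
          have h1 : Real.cos (δ' / 2) < 1 := by
            have h := Real.cos_lt_cos_of_nonneg_of_le_pi (le_refl (0:ℝ))
                (show δ' / 2 ≤ π by linarith) (show (0:ℝ) < δ' / 2 by linarith)
            simpa using h
          have h0 : 0 ≤ Real.cos (δ' / 2) :=
            Real.cos_nonneg_of_mem_Icc ⟨by linarith, by linarith⟩
          exact pow_lt_one₀ h0 h1 two_ne_zero
        have hbound : ∀ x ∈ s \ u, Real.cos (x / 2) ^ 2 ≤ c := by
          rintro x ⟨hxs, hxu⟩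
          have hxd : δ ≤ |x| := by
            by_contra h
            push_neg at h
            exact hxu (hball (by simpa [Metric.mem_ball, Real.dist_eq] using h))
          have hxδ' : δ' ≤ |x| := le_trans (min_le_left _ _) hxd
          have hxπ : |x| ≤ π := abs_le.2 ⟨le_of_lt hxs.1, hxs.2⟩
          have hcos_eq : Real.cos (x / 2) = Real.cos (|x| / 2) := by
            rw [← Real.cos_abs (x / 2), abs_div]
            norm_num
          have h1 : Real.cos (|x| / 2) ≤ Real.cos (δ' / 2) :=
            Real.cos_le_cos_of_nonneg_of_le_pi (show (0:ℝ) ≤ δ' / 2 by linarith)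
              (show |x| / 2 ≤ π by linarith) (show δ' / 2 ≤ |x| / 2 by linarith)
          have h0 : 0 ≤ Real.cos (|x| / 2) :=
            Real.cos_nonneg_of_mem_Icc ⟨by linarith, by linarith⟩
          rw [hcos_eq, hc_def]
          exact pow_le_pow_left₀ h0 h1 2
        rw [Metric.tendstoUniformlyOn_iff]
        intro ε hε
        have hb : Tendsto (fun N : ℕ => (1 / (2 * π)) * (2 * (N : ℝ) * c ^ N))
            atTop (nhds 0) := by
          have h := (geom_tendsto c hc0 hc1).const_mul (1 / (2 * π))
          rw [mul_zero] at h
          exact h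
        filter_upwards [eventually_ge_atTop 1, hb.eventually (gt_mem_nhds hε)] with N hN1 hNb x hx
        have hφle : φ N x ≤ (1 / (2 * π)) * (2 * (N : ℝ) * c ^ N) := by
          simp only [hφ_def]
          apply mul_le_mul_of_nonneg_left (phi_le (hbound x hx) hc0 N hN1) (by positivity)
        have hnn : 0 ≤ φ N x := hφ_nonneg N x
        simp only [Pi.zero_apply, dist_zero_left, Real.norm_eq_abs, abs_of_nonneg hnn]
        linarith
      · exact (tendsto_const_nhds (x := (1:ℝ))).congr fun N => (hint N).symm
      · refine Filter.Eventually.of_forall fun N => Continuous.aestronglyMeasurable ?_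
        simp only [hφ_def]
        fun_prop
      · exact (hf.integrableOn_Icc).mono_set Set.Ioc_subset_Icc_self
      · exact (hf 0 ⟨by linarith, by linarith⟩).mono Set.Ioc_subset_Icc_self
    refine Tendsto.congr (fun N => ?_) main
    rw [intervalIntegral.integral_of_le hle, ← MeasureTheory.integral_const_mul]
    apply MeasureTheory.integral_congr_ae
    apply Filter.Eventually.of_forall
    intro x
    simp only [hφ_def, smul_eq_mul]
    ring
end

section
/- Define c_{ij} = cos(φ_A^(i) + φ_B^(j)) for real angles. Then the maximum over all angles φ_A^(1), φ_A^(2), φ_B^(1), φ_B^(2) of the expression c_{11} + c_{12} + c_{21} - c_{22} equals 2√2. -/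
open Real

theorem chsh_cosine_maximum :
    IsGreatest
      {r : ℝ | ∃ φA₁ φA₂ φB₁ φB₂ : ℝ,
        r = Real.cos (φA₁ + φB₁) + Real.cos (φA₁ + φB₂) +
            Real.cos (φA₂ + φB₁) - Real.cos (φA₂ + φB₂)}
      (2 * Real.sqrt 2) := by
  constructor
  · refine ⟨0, π/2, -(π/4), π/4, ?_⟩
    have h1 : (0:ℝ) + -(π/4) = -(π/4) := by ring
    have h2 : (0:ℝ) + π/4 = π/4 := by ring
    have h3 : π/2 + -(π/4) = π/4 := by ring
    have h4 : π/2 + π/4 = π/2 + π/4 := rfl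
    rw [h1, h2, h3, Real.cos_neg, Real.cos_add, Real.cos_pi_div_two, Real.sin_pi_div_two,
      Real.cos_pi_div_four, Real.sin_pi_div_four]
    ring
  · rintro r ⟨a, b, c, d, rfl⟩
    simp only [Real.cos_add] at *
    set P := Real.cos c + Real.cos d with hP
    set Q := Real.sin c + Real.sin d with hQ
    set R := Real.cos c - Real.cos d with hR
    set S := Real.sin c - Real.sin d with hS
    have hsum : P^2 + Q^2 + (R^2 + S^2) = 4 := by
      have := Real.sin_sq_add_cos_sq c
      have := Real.sin_sq_add_cos_sq d
      simp only [hP, hQ, hR, hS]; nlinarith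
    have h1 : Real.cos a * P - Real.sin a * Q ≤ Real.sqrt (P^2 + Q^2) := by
      have hc : (Real.cos a * P - Real.sin a * Q)^2 ≤ P^2 + Q^2 := by
        nlinarith [Real.sin_sq_add_cos_sq a, sq_nonneg (Real.cos a * Q + Real.sin a * P)]
      calc Real.cos a * P - Real.sin a * Q ≤ |Real.cos a * P - Real.sin a * Q| := le_abs_self _
        _ = Real.sqrt ((Real.cos a * P - Real.sin a * Q)^2) := (Real.sqrt_sq_eq_abs _).symm
        _ ≤ _ := Real.sqrt_le_sqrt hc
    have h2 : Real.cos b * R - Real.sin b * S ≤ Real.sqrt (R^2 + S^2) := by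
      have hc : (Real.cos b * R - Real.sin b * S)^2 ≤ R^2 + S^2 := by
        nlinarith [Real.sin_sq_add_cos_sq b, sq_nonneg (Real.cos b * S + Real.sin b * R)]
      calc Real.cos b * R - Real.sin b * S ≤ |Real.cos b * R - Real.sin b * S| := le_abs_self _
        _ = Real.sqrt ((Real.cos b * R - Real.sin b * S)^2) := (Real.sqrt_sq_eq_abs _).symm
        _ ≤ _ := Real.sqrt_le_sqrt hc
    have h3 : Real.sqrt (P^2 + Q^2) + Real.sqrt (R^2 + S^2) ≤ 2 * Real.sqrt 2 := by
      have hA : (0:ℝ) ≤ P^2 + Q^2 := by positivity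
      have hB : (0:ℝ) ≤ R^2 + S^2 := by positivity
      have sA := Real.sq_sqrt hA
      have sB := Real.sq_sqrt hB
      have nA := Real.sqrt_nonneg (P^2 + Q^2)
      have nB := Real.sqrt_nonneg (R^2 + S^2)
      have s2 := Real.sq_sqrt (by norm_num : (0:ℝ) ≤ 2)
      have n2 := Real.sqrt_nonneg 2
      nlinarith [sq_nonneg (Real.sqrt (P^2 + Q^2) - Real.sqrt (R^2 + S^2)),
        sq_nonneg (Real.sqrt (P^2 + Q^2) + Real.sqrt (R^2 + S^2) - 2 * Real.sqrt 2)]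
    have hexpr : Real.cos a * Real.cos c - Real.sin a * Real.sin c +
        (Real.cos a * Real.cos d - Real.sin a * Real.sin d) +
        (Real.cos b * Real.cos c - Real.sin b * Real.sin c) -
        (Real.cos b * Real.cos d - Real.sin b * Real.sin d) =
        (Real.cos a * P - Real.sin a * Q) + (Real.cos b * R - Real.sin b * S) := by
      simp only [hP, hQ, hR, hS]; ring
    linarith [h1, h2, h3, hexpr.le, hexpr.ge]
end

section
/- With i_{01} = √(2/π), i_{12} = 1/√π, and state coefficients c_0 = 2/√10, c_1 = 1/√2, c_2 = 1/√10, the CHSH expectation value ⟨B⟩ = (√5/π)(c_{11} + c_{12} + c_{21} - c_{22}), maximized over angles, equals 2√10/π, which is strictly greater than 2. -/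
open Real

lemma chsh_core (p q u : ℝ) :
    Real.cos (p + u) + Real.cos (p - u) +
      Real.cos (q + u) - Real.cos (q - u) ≤ 2 * Real.sqrt 2 := by
  rw [Real.cos_add, Real.cos_sub, Real.cos_add, Real.cos_sub]
  have hp := Real.sin_sq_add_cos_sq p
  have hq := Real.sin_sq_add_cos_sq q
  have hu := Real.sin_sq_add_cos_sq u
  have ht : Real.sqrt 2 ^ 2 = 2 := Real.sq_sqrt (by norm_num)
  have ht1 : (1:ℝ) ≤ Real.sqrt 2 := by nlinarith [Real.sqrt_nonneg 2]
  nlinarith [sq_nonneg (Real.cos p * Real.sin u + Real.sin q * Real.cos u),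
    sq_nonneg (Real.cos p * Real.cos u - Real.sin q * Real.sin u - Real.sqrt 2),
    sq_nonneg (Real.cos p * Real.cos u - Real.sin q * Real.sin u + Real.sqrt 2),
    sq_nonneg (Real.cos p), sq_nonneg (Real.sin q), Real.sqrt_nonneg 2]

lemma chsh_bound (a1 a2 b1 b2 : ℝ) :
    Real.cos (a1 + b1) + Real.cos (a1 + b2) +
      Real.cos (a2 + b1) - Real.cos (a2 + b2) ≤ 2 * Real.sqrt 2 := by
  have h := chsh_core (a1 + (b1 + b2) / 2) (a2 + (b1 + b2) / 2) ((b1 - b2) / 2)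
  have e1 : a1 + (b1 + b2) / 2 + (b1 - b2) / 2 = a1 + b1 := by ring
  have e2 : a1 + (b1 + b2) / 2 - (b1 - b2) / 2 = a1 + b2 := by ring
  have e3 : a2 + (b1 + b2) / 2 + (b1 - b2) / 2 = a2 + b1 := by ring
  have e4 : a2 + (b1 + b2) / 2 - (b1 - b2) / 2 = a2 + b2 := by ring
  rwa [e1, e2, e3, e4] at h

theorem chsh_violation_macroscopic :
    IsGreatest
      {r : ℝ | ∃ φA₁ φA₂ φB₁ φB₂ : ℝ,
        r = (Real.sqrt 5 / π) *
          (Real.cos (φA₁ + φB₁) + Real.cos (φA₁ + φB₂) +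
           Real.cos (φA₂ + φB₁) - Real.cos (φA₂ + φB₂))}
      (2 * Real.sqrt 10 / π) ∧
    2 < 2 * Real.sqrt 10 / π := by
  have hpi := Real.pi_pos
  have h10 : Real.sqrt 10 = Real.sqrt 5 * Real.sqrt 2 := by
    rw [← Real.sqrt_mul (by norm_num)]; norm_num
  have h5 : (0:ℝ) < Real.sqrt 5 := Real.sqrt_pos.mpr (by norm_num)
  constructor
  · constructor
    · refine ⟨0, π/2, -(π/4), π/4, ?_⟩
      have : Real.cos (0 + -(π/4)) + Real.cos (0 + π/4) +
          Real.cos (π/2 + -(π/4)) - Real.cos (π/2 + π/4) = 2 * Real.sqrt 2 := by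
        have h1 : (0:ℝ) + -(π/4) = -(π/4) := by ring
        have h2 : (0:ℝ) + π/4 = π/4 := by ring
        have h3 : π/2 + -(π/4) = π/4 := by ring
        have h4 : π/2 + π/4 = π - π/4 := by ring
        rw [h1, h2, h3, h4, Real.cos_neg, Real.cos_pi_sub, Real.cos_pi_div_four]
        ring
      rw [this, h10]
      ring
    · rintro r ⟨a1, a2, b1, b2, rfl⟩
      have hb := chsh_bound a1 a2 b1 b2
      rw [h10]
      rw [div_mul_eq_mul_div, div_le_div_iff₀ hpi hpi]
      nlinarith [mul_le_mul_of_nonneg_left hb (le_of_lt h5), mul_pos h5 hpi]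
  · rw [lt_div_iff₀ hpi]
    have hlt : Real.pi < 3.15 := by
      have := Real.pi_lt_d2
      linarith
    nlinarith [Real.sq_sqrt (by norm_num : (0:ℝ) ≤ 10), Real.sqrt_nonneg 10]
end

section
/- For any complex numbers a and b, if z_N is a complex sequence with z_N = 1 + a/√N + b/N + r_N where |r_N| ≤ C·N^{-3/2} for some constant C, then e^{-a√N} z_N^N → exp(b - a²/2) as N → ∞. -/
open Filter Complex

lemma log_cubic_bound {w : ℂ} (h : ‖w‖ ≤ 1/2) :
    ‖Complex.log (1 + w) - w + w ^ 2 / 2‖ ≤ ‖w‖ ^ 3 := by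
  have h1 : ‖w‖ < 1 := lt_of_le_of_lt h (by norm_num)
  have key := Complex.norm_log_sub_logTaylor_le 2 h1
  have hT : Complex.logTaylor 3 w = w - w ^ 2 / 2 := by
    simp [Complex.logTaylor_succ, Complex.logTaylor_zero]
    ring
  rw [hT] at key
  have e : Complex.log (1 + w) - (w - w ^ 2 / 2) = Complex.log (1 + w) - w + w ^ 2 / 2 := by ring
  rw [e] at key
  have key' : ‖Complex.log (1 + w) - w + w ^ 2 / 2‖ ≤ ‖w‖ ^ 3 * (1 - ‖w‖)⁻¹ / 3 := by
    convert key using 2 <;> norm_num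
  have h2 : (1 - ‖w‖)⁻¹ ≤ 2 := by
    rw [inv_le_comm₀ (by linarith) (by norm_num)]
    linarith
  have h2' : (0:ℝ) ≤ (1 - ‖w‖)⁻¹ := inv_nonneg.mpr (by linarith)
  have h3 : (0:ℝ) ≤ ‖w‖ ^ 3 := by positivity
  nlinarith [mul_le_mul_of_nonneg_left h2 h3]

theorem limit_power_expansion (a b : ℂ) (C : ℝ) (hC : 0 < C) (z r : ℕ → ℂ)
    (hz : ∀ N : ℕ, 1 ≤ N → z N = 1 + a / (Real.sqrt N : ℂ) + b / (N : ℂ) + r N)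
    (hr : ∀ N : ℕ, 1 ≤ N → ‖r N‖ ≤ C * (N : ℝ) ^ (-(3 : ℝ) / 2)) :
    Tendsto (fun N : ℕ => Complex.exp (-a * (Real.sqrt N : ℂ)) * z N ^ N)
      atTop (nhds (Complex.exp (b - a ^ 2 / 2))) := by
  set w : ℕ → ℂ := fun N => a / (Real.sqrt N : ℂ) + b / (N : ℂ) + r N with hwdef
  have hsq : Tendsto (fun N : ℕ => Real.sqrt N) atTop atTop := by
    apply tendsto_atTop_atTop.mpr
    intro c
    obtain ⟨m, hm⟩ := exists_nat_ge (c ^ 2)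
    refine ⟨m, fun N hN => Real.le_sqrt_of_sq_le (hm.trans ?_)⟩
    exact_mod_cast hN
  have hdiv : ∀ c : ℝ, Tendsto (fun N : ℕ => c / Real.sqrt N) atTop (nhds 0) :=
    fun c => Tendsto.div_atTop tendsto_const_nhds hsq
  have hsqpos : ∀ N : ℕ, 1 ≤ N → (0:ℝ) < Real.sqrt N := by
    intro N hN
    exact Real.sqrt_pos.mpr (by exact_mod_cast Nat.pos_of_ne_zero (by omega))
  have hsq2 : ∀ N : ℕ, ((Real.sqrt N : ℝ) : ℂ) ^ 2 = (N : ℂ) := by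
    intro N
    norm_cast
    exact Real.sq_sqrt (Nat.cast_nonneg N)
  have hsle : ∀ N : ℕ, 1 ≤ N → Real.sqrt N ≤ N := by
    intro N hN
    have hN1 : (1:ℝ) ≤ (N:ℝ) := by exact_mod_cast hN
    have h := Real.sqrt_le_sqrt (show (N:ℝ) ≤ (N:ℝ) ^ 2 by nlinarith)
    rwa [Real.sqrt_sq (by positivity)] at h
  have hr' : ∀ N : ℕ, 1 ≤ N → ‖r N‖ ≤ C / (Real.sqrt N * N) := by
    intro N hN
    have hNpos : (0:ℝ) < N := by exact_mod_cast Nat.pos_of_ne_zero (by omega)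
    have e1 : (N:ℝ) ^ (-(3:ℝ)/2) = (Real.sqrt N * N)⁻¹ := by
      rw [show (-(3:ℝ)/2) = -(3/2) by norm_num, Real.rpow_neg hNpos.le]
      congr 1
      rw [show (3:ℝ)/2 = 1/2 + 1 by norm_num, Real.rpow_add hNpos, Real.rpow_one,
        Real.sqrt_eq_rpow]
    calc ‖r N‖ ≤ C * (N:ℝ) ^ (-(3:ℝ)/2) := hr N hN
    _ = C / (Real.sqrt N * N) := by rw [e1, div_eq_mul_inv]
  set D : ℝ := ‖a‖ + ‖b‖ + C with hD
  have hwb : ∀ N : ℕ, 1 ≤ N → ‖w N‖ ≤ D / Real.sqrt N := by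
    intro N hN
    have hs := hsqpos N hN
    have hN1 : (1:ℝ) ≤ (N:ℝ) := by exact_mod_cast hN
    have h1 : ‖a / (Real.sqrt N : ℂ)‖ = ‖a‖ / Real.sqrt N := by
      rw [norm_div, Complex.norm_real, Real.norm_eq_abs, abs_of_pos hs]
    have h2 : ‖b / (N : ℂ)‖ ≤ ‖b‖ / Real.sqrt N := by
      rw [norm_div, Complex.norm_natCast]
      exact div_le_div_of_nonneg_left (norm_nonneg b) hs (hsle N hN)
    have h3 : ‖r N‖ ≤ C / Real.sqrt N := by
      refine (hr' N hN).trans ?_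
      apply div_le_div_of_nonneg_left hC.le hs
      nlinarith
    calc ‖w N‖ ≤ ‖a / (Real.sqrt N : ℂ)‖ + ‖b / (N:ℂ)‖ + ‖r N‖ := by
          refine (norm_add_le _ _).trans ?_
          gcongr
          exact norm_add_le _ _
    _ ≤ ‖a‖ / Real.sqrt N + ‖b‖ / Real.sqrt N + C / Real.sqrt N := by
          rw [h1]; gcongr
    _ = D / Real.sqrt N := by rw [hD]; ring
  have hhalf : ∀ᶠ N : ℕ in atTop, ‖w N‖ ≤ 1/2 := by
    have := (hdiv D).eventually_lt_const (show (0:ℝ) < 1/2 by norm_num)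
    filter_upwards [this, eventually_ge_atTop 1] with N h1 h2
    exact (hwb N h2).trans h1.le
  have hNr : Tendsto (fun N : ℕ => (N:ℂ) * r N) atTop (nhds 0) := by
    refine squeeze_zero_norm' ?_ (hdiv C)
    filter_upwards [eventually_ge_atTop 1] with N hN
    have hs := hsqpos N hN
    rw [norm_mul, Complex.norm_natCast]
    calc (N:ℝ) * ‖r N‖ ≤ (N:ℝ) * (C / (Real.sqrt N * N)) := by
          gcongr; exact hr' N hN
    _ = C / Real.sqrt N := by
          have hNpos : (0:ℝ) < N := by exact_mod_cast Nat.pos_of_ne_zero (by omega)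
          field_simp
  have hsr : Tendsto (fun N : ℕ => ((Real.sqrt N : ℝ) : ℂ) * r N) atTop (nhds 0) := by
    refine squeeze_zero_norm' ?_ (hdiv C)
    filter_upwards [eventually_ge_atTop 1] with N hN
    have hs := hsqpos N hN
    have hNpos : (0:ℝ) < N := by exact_mod_cast Nat.pos_of_ne_zero (by omega)
    rw [norm_mul, Complex.norm_real, Real.norm_eq_abs, abs_of_pos hs]
    calc Real.sqrt N * ‖r N‖ ≤ Real.sqrt N * (C / (Real.sqrt N * N)) := by
          gcongr; exact hr' N hN
    _ = C / N := by field_simp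
    _ ≤ C / Real.sqrt N := div_le_div_of_nonneg_left hC.le hs (hsle N hN)
  have hbs : Tendsto (fun N : ℕ => b / ((Real.sqrt N : ℝ) : ℂ)) atTop (nhds 0) := by
    refine squeeze_zero_norm' ?_ (hdiv ‖b‖)
    filter_upwards [eventually_ge_atTop 1] with N hN
    rw [norm_div, Complex.norm_real, Real.norm_eq_abs, abs_of_pos (hsqpos N hN)]
  have hsw : Tendsto (fun N : ℕ => ((Real.sqrt N : ℝ) : ℂ) * w N) atTop (nhds a) := by
    have base : Tendsto (fun N : ℕ => a + b / ((Real.sqrt N : ℝ) : ℂ)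
        + ((Real.sqrt N : ℝ) : ℂ) * r N) atTop (nhds a) := by
      have := ((tendsto_const_nhds : Tendsto (fun _ : ℕ => a) atTop (nhds a)).add hbs).add hsr
      simpa using this
    refine base.congr' ?_
    filter_upwards [eventually_ge_atTop 1] with N hN
    have hs : ((Real.sqrt N : ℝ) : ℂ) ≠ 0 := by
      exact_mod_cast (hsqpos N hN).ne'
    have hN0 : ((N:ℕ) : ℂ) ≠ 0 := by exact_mod_cast (Nat.pos_of_ne_zero (by omega)).ne'
    have e1 : ((Real.sqrt N : ℝ) : ℂ) * (a / ((Real.sqrt N : ℝ) : ℂ)) = a := by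
      field_simp
    have e2 : ((Real.sqrt N : ℝ) : ℂ) * (b / (N:ℂ)) = b / ((Real.sqrt N : ℝ) : ℂ) := by
      rw [← hsq2 N]
      field_simp
    have key : ((Real.sqrt N : ℝ) : ℂ) * w N
        = a + b / ((Real.sqrt N : ℝ) : ℂ) + ((Real.sqrt N : ℝ) : ℂ) * r N := by
      simp only [hwdef]
      rw [mul_add, mul_add, e1, e2]
    exact key.symm
  have hNw2 : Tendsto (fun N : ℕ => (N:ℂ) * (w N) ^ 2) atTop (nhds (a ^ 2)) := by
    refine (hsw.pow 2).congr ?_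
    intro N
    rw [mul_pow, hsq2 N]
  have hterm1 : Tendsto (fun N : ℕ => (N:ℂ) * w N - a * ((Real.sqrt N : ℝ) : ℂ))
      atTop (nhds b) := by
    have base : Tendsto (fun N : ℕ => b + (N:ℂ) * r N) atTop (nhds b) := by
      simpa using (tendsto_const_nhds : Tendsto (fun _ : ℕ => b) atTop (nhds b)).add hNr
    refine base.congr' ?_
    filter_upwards [eventually_ge_atTop 1] with N hN
    have hs : ((Real.sqrt N : ℝ) : ℂ) ≠ 0 := by
      exact_mod_cast (hsqpos N hN).ne'
    have hN0 : ((N:ℕ) : ℂ) ≠ 0 := by exact_mod_cast (Nat.pos_of_ne_zero (by omega)).ne'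
    have e3 : (N:ℂ) * (a / ((Real.sqrt N : ℝ) : ℂ)) = a * ((Real.sqrt N : ℝ) : ℂ) := by
      rw [← hsq2 N]
      field_simp
    have e4 : (N:ℂ) * (b / (N:ℂ)) = b := by field_simp
    have key : (N:ℂ) * w N - a * ((Real.sqrt N : ℝ) : ℂ) = b + (N:ℂ) * r N := by
      simp only [hwdef]
      rw [mul_add, mul_add, e3, e4]
      ring
    exact key.symm
  have herr : Tendsto (fun N : ℕ =>
      (N:ℂ) * (Complex.log (1 + w N) - w N + (w N) ^ 2 / 2)) atTop (nhds 0) := by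
    refine squeeze_zero_norm' ?_ (hdiv (D ^ 3))
    filter_upwards [eventually_ge_atTop 1, hhalf] with N hN hh
    have hs := hsqpos N hN
    rw [norm_mul, Complex.norm_natCast]
    have hb3 : ‖w N‖ ^ 3 ≤ (D / Real.sqrt N) ^ 3 :=
      pow_le_pow_left₀ (norm_nonneg _) (hwb N hN) 3
    calc (N:ℝ) * ‖Complex.log (1 + w N) - w N + (w N) ^ 2 / 2‖
        ≤ (N:ℝ) * (D / Real.sqrt N) ^ 3 := by
          gcongr
          exact (log_cubic_bound hh).trans hb3
    _ = D ^ 3 / Real.sqrt N := by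
          have h2 : Real.sqrt N ^ 2 = (N:ℝ) := Real.sq_sqrt (Nat.cast_nonneg N)
          rw [div_pow]
          rw [show Real.sqrt N ^ 3 = Real.sqrt N ^ 2 * Real.sqrt N from by ring, h2]
          field_simp
  have hE : Tendsto (fun N : ℕ => (N:ℂ) * Complex.log (1 + w N)
      - a * ((Real.sqrt N : ℝ) : ℂ)) atTop (nhds (b - a ^ 2 / 2)) := by
    have comb := (hterm1.sub (hNw2.div_const 2)).add herr
    rw [show b - a ^ 2 / 2 + 0 = b - a ^ 2 / 2 from by ring] at comb
    refine comb.congr ?_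
    intro N
    ring
  have hexp := (Complex.continuous_exp.tendsto (b - a ^ 2 / 2)).comp hE
  refine hexp.congr' ?_
  filter_upwards [eventually_ge_atTop 1, hhalf] with N hN hh
  have hwne : (1 : ℂ) + w N ≠ 0 := by
    intro hcon
    have : w N = -1 := by linear_combination hcon
    rw [this] at hh
    norm_num at hh
  have hzw : z N = 1 + w N := by rw [hz N hN, hwdef]; ring
  simp only [Function.comp]
  rw [hzw, sub_eq_add_neg, Complex.exp_add, Complex.exp_nat_mul, Complex.exp_log hwne,
    neg_mul]
  ring
end
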